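/- arXiv:2104.04340 — 2 statements merged into one kernel-verified Lean document; each statement's English description precedes it below -/
import Mathlib

section
/- Let T be a real tree and γ, δ hyperbolic isometries whose axes intersect in exactly one point (or in a segment on which the translation directions agree). Then l(γδ) = l(γ) + l(δ). -/
/-- A real tree: a geodesic metric space which is 0-hyperbolic
(four-point condition), so that any two points are joined by a unique arc,
which is geodesic. -/
def IsRTree (T : Type*) [MetricSpace T] : Prop :=
  (∀ x y : T, ∃ f : ℝ → T, f 0 = x ∧ f (dist x y) = y ∧
    ∀ s ∈ Set.Icc (0 : ℝ) (dist x y), ∀ t ∈ Set.Icc (0 : ℝ) (dist x y),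
      dist (f s) (f t) = |s - t|) ∧
  (∀ x y z w : T, dist x y + dist z w ≤ max (dist x z + dist y w) (dist x w + dist y z))

/-- The translation length `l(γ) = inf_x d(x, γ x)` of an isometry. -/
noncomputable def transLen {T : Type*} [MetricSpace T] (γ : T ≃ᵢ T) : ℝ :=
  ⨅ x : T, dist x (γ x)

/-- The axis `A_γ = {x | d(x, γ x) = l(γ)}` of an isometry. -/
def axisSet {T : Type*} [MetricSpace T] (γ : T ≃ᵢ T) : Set T :=
  {x | dist x (γ x) = transLen γ}

/-- An isometry is hyperbolic if its translation length is attained and positive. -/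
def IsHyperbolicIso {T : Type*} [MetricSpace T] (γ : T ≃ᵢ T) : Prop :=
  0 < transLen γ ∧ (axisSet γ).Nonempty

section Aux

variable {T : Type*} [MetricSpace T]

lemma transLen_le [Nonempty T] (γ : T ≃ᵢ T) (x : T) : transLen γ ≤ dist x (γ x) :=
  ciInf_le ⟨0, by rintro _ ⟨y, rfl⟩; exact dist_nonneg⟩ x

lemma dist_symm_left (γ : T ≃ᵢ T) (a b : T) : dist a (γ b) = dist (γ.symm a) b := by
  conv_lhs => rw [← γ.apply_symm_apply a]
  exact γ.dist_eq _ _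

lemma dist_symm_right (γ : T ≃ᵢ T) (a b : T) : dist a (γ.symm b) = dist (γ a) b := by
  rw [dist_symm_left γ.symm a b, IsometryEquiv.symm_symm]

/-- Gromov product four-point inequality (doubled, unhalved form). -/
lemma gromov_min
    (hfour : ∀ x y z w : T,
      dist x y + dist z w ≤ max (dist x z + dist y w) (dist x w + dist y z))
    (x y z w : T) :
    min (dist x w + dist z w - dist x z) (dist y w + dist z w - dist y z)
      ≤ dist x w + dist y w - dist x y := by
  have h := hfour x y z w
  rw [le_max_iff] at h
  rcases h with h | h
  · exact min_le_of_left_le (by linarith)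
  · exact min_le_of_right_le (by linarith)

/-- If the Gromov product of `q` and `r` at the common axis point `p` is positive,
then there is another common axis point `x` strictly between. -/
lemma exists_mid [Nonempty T] (hT : IsRTree T) (γ δ : T ≃ᵢ T) (p q r : T)
    (hq : dist p q = transLen γ) (hr : dist p r = transLen δ)
    (hlγ : 0 < transLen γ)
    (hγb : ∀ x : T, dist x (γ x) ≤ dist p x + dist q x)
    (hδb : ∀ x : T, dist x (δ x) ≤ dist p x + dist r x)
    (he : 0 < dist p q + dist p r - dist q r) :
    ∃ x, x ∈ axisSet γ ∩ axisSet δ ∧ 0 < dist p x ∧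
      dist q x = transLen γ - dist p x ∧ dist r x = transLen δ - dist p x := by
  obtain ⟨f, hf0, hfq, hfi⟩ := hT.1 p q
  set e : ℝ := (dist p q + dist p r - dist q r) / 2 with he2
  set t : ℝ := min e (transLen γ) with ht
  have hte : t ≤ e := min_le_left _ _
  have ht0 : 0 < t := lt_min (by simp only [he2]; linarith) hlγ
  have htd : t ≤ dist p q := by rw [hq]; exact min_le_right _ _
  have h0m : (0:ℝ) ∈ Set.Icc (0:ℝ) (dist p q) := ⟨le_refl _, dist_nonneg⟩
  have htm : t ∈ Set.Icc (0:ℝ) (dist p q) := ⟨ht0.le, htd⟩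
  have hdm : dist p q ∈ Set.Icc (0:ℝ) (dist p q) := ⟨dist_nonneg, le_refl _⟩
  have hpx : dist p (f t) = t := by
    conv_lhs => rw [← hf0]
    rw [hfi 0 h0m t htm, abs_of_nonpos (by linarith)]
    ring
  have hxq : dist (f t) q = dist p q - t := by
    have h := hfi t htm (dist p q) hdm
    rw [hfq] at h
    rw [h, abs_of_nonpos (by linarith)]
    ring
  have hrx : dist r (f t) = transLen δ - t := by
    have hmin := gromov_min hT.2 (f t) r q p
    have c1 : dist (f t) p = t := by rw [dist_comm]; exact hpx
    have c2 : dist q p = dist p q := dist_comm q p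
    have c3 : dist r p = dist p r := dist_comm r p
    have c4 : dist r q = dist q r := dist_comm r q
    have hA : 2 * t ≤ dist (f t) p + dist q p - dist (f t) q := by
      rw [c1, c2, hxq]; linarith
    have hB : 2 * t ≤ dist r p + dist q p - dist r q := by
      rw [c3, c2, c4]; linarith
    have hkey := le_trans (le_min hA hB) hmin
    have htri : dist p r ≤ dist p (f t) + dist (f t) r := dist_triangle _ _ _
    have c5 : dist (f t) r = dist r (f t) := dist_comm _ _
    linarith
  have hγx : f t ∈ axisSet γ := by
    have hub : dist (f t) (γ (f t)) ≤ transLen γ := by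
      have h := hγb (f t)
      have c1 : dist q (f t) = dist (f t) q := dist_comm _ _
      linarith [hxq, hpx, hq]
    exact le_antisymm hub (transLen_le γ (f t))
  have hδx : f t ∈ axisSet δ := by
    have hub : dist (f t) (δ (f t)) ≤ transLen δ := by
      have h := hδb (f t)
      have c1 : dist r (f t) = transLen δ - t := hrx
      linarith [hpx]
    exact le_antisymm hub (transLen_le δ (f t))
  refine ⟨f t, ⟨hγx, hδx⟩, ?_, ?_, ?_⟩
  · rw [hpx]; exact ht0
  · rw [dist_comm q (f t), hxq, hpx, hq]
  · rw [hpx]; exact hrx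

lemma iter_iso (gm : T → T) (hiso : ∀ a b, dist (gm a) (gm b) = dist a b) :
    ∀ (n : ℕ) (a b : T), dist (gm^[n] a) (gm^[n] b) = dist a b := by
  intro n
  induction n with
  | zero => intro a b; simp
  | succ k ih =>
    intro a b
    rw [Function.iterate_succ_apply, Function.iterate_succ_apply, ih, hiso]

lemma chain_dist
    (hfour : ∀ x y z w : T,
      dist x y + dist z w ≤ max (dist x z + dist y w) (dist x w + dist y z))
    (gm : T → T) (hiso : ∀ a b, dist (gm a) (gm b) = dist a b)
    (p : T) (L : ℝ) (hL : 0 < L)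
    (h1 : dist p (gm p) = L) (h2 : dist p (gm (gm p)) = 2 * L) :
    ∀ n : ℕ, dist p (gm^[n] p) = n * L := by
  have hisoN := iter_iso gm hiso
  have key : ∀ n : ℕ, dist p (gm^[n] p) = n * L ∧ dist p (gm^[n + 1] p) = (n + 1) * L := by
    intro n
    induction n with
    | zero =>
      constructor
      · simp
      · simpa using h1
    | succ k ih =>
      obtain ⟨ih1, ih2⟩ := ih
      refine ⟨by exact_mod_cast ih2, ?_⟩
      have hbc : dist (gm^[k] p) (gm^[k + 1] p) = L := by
        rw [Function.iterate_succ_apply gm k p, hisoN k p (gm p), h1]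
      have hcd : dist (gm^[k + 1] p) (gm^[k + 1 + 1] p) = L := by
        rw [Function.iterate_succ_apply gm (k+1) p, hisoN (k+1) p (gm p), h1]
      have hbd : dist (gm^[k] p) (gm^[k + 1 + 1] p) = 2 * L := by
        rw [Function.iterate_succ_apply gm (k+1) p, Function.iterate_succ_apply gm k (gm p),
          hisoN k p (gm (gm p)), h2]
      have hmin := gromov_min hfour (gm^[k] p) (gm^[k + 1 + 1] p) p (gm^[k + 1] p)
      have c1 : dist (gm^[k] p) p = dist p (gm^[k] p) := dist_comm _ _
      have c2 : dist p (gm^[k + 1] p) = ((k:ℝ) + 1) * L := by exact_mod_cast ih2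
      have c2' : dist (gm^[k + 1 + 1] p) (gm^[k + 1] p) = L := by
        rw [dist_comm]; exact hcd
      have c3 : dist p (gm^[k] p) = (k:ℝ) * L := by exact_mod_cast ih1
      have h0 : dist (gm^[k] p) (gm^[k + 1] p) + dist (gm^[k + 1 + 1] p) (gm^[k + 1] p)
          - dist (gm^[k] p) (gm^[k + 1 + 1] p) ≤ 0 := by
        rw [hbc, c2', hbd]; linarith
      have hfirst : dist (gm^[k] p) (gm^[k + 1] p) + dist p (gm^[k + 1] p)
          - dist (gm^[k] p) p = 2 * L := by
        rw [hbc, c1, c2, c3]; ring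
      have hmin2 : dist (gm^[k + 1 + 1] p) (gm^[k + 1] p) + dist p (gm^[k + 1] p)
          - dist (gm^[k + 1 + 1] p) p ≤ 0 := by
        rcases min_le_iff.mp (hmin.trans h0) with h | h
        · rw [hfirst] at h; linarith
        · exact h
      have htri : dist p (gm^[k + 1 + 1] p) ≤ dist p (gm^[k + 1] p)
          + dist (gm^[k + 1] p) (gm^[k + 1 + 1] p) := dist_triangle _ _ _
      have c4 : dist (gm^[k + 1 + 1] p) p = dist p (gm^[k + 1 + 1] p) := dist_comm _ _
      push_cast
      rw [c4] at hmin2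
      rw [c2', c2] at hmin2
      rw [hcd, c2] at htri
      linarith
  intro n
  exact (key n).1

end Aux

section Key

variable {T : Type*} [MetricSpace T] [Nonempty T]

omit [Nonempty T] in
lemma dist_symm_self (γ : T ≃ᵢ T) {p : T} (hp : p ∈ axisSet γ) :
    dist p (γ.symm p) = transLen γ := by
  rw [dist_symm_right, dist_comm]
  exact hp

/-- Orientation (i): if `d(γ⁻¹p, δp) < l(γ)+l(δ)`, produce another common axis point. -/
lemma keyA (hT : IsRTree T) (γ δ : T ≃ᵢ T) (p : T)
    (hpγ : p ∈ axisSet γ) (hpδ : p ∈ axisSet δ) (hlγ : 0 < transLen γ)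
    (hne : dist (γ.symm p) (δ p) ≠ transLen γ + transLen δ) :
    ∃ x, x ∈ axisSet γ ∩ axisSet δ ∧ 0 < dist p x ∧
      dist (γ.symm p) x = transLen γ - dist p x ∧
      dist (δ p) x = transLen δ - dist p x := by
  have hq : dist p (γ.symm p) = transLen γ := dist_symm_self γ hpγ
  have hr : dist p (δ p) = transLen δ := hpδ
  have hγb : ∀ x : T, dist x (γ x) ≤ dist p x + dist (γ.symm p) x := by
    intro x
    have h := dist_triangle x p (γ x)
    have h2 : dist p (γ x) = dist (γ.symm p) x := dist_symm_left γ p x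
    have h3 : dist x p = dist p x := dist_comm _ _
    linarith
  have hδb : ∀ x : T, dist x (δ x) ≤ dist p x + dist (δ p) x := by
    intro x
    have h := dist_triangle x (δ p) (δ x)
    have h2 : dist (δ p) (δ x) = dist p x := δ.dist_eq p x
    have h3 : dist x (δ p) = dist (δ p) x := dist_comm _ _
    linarith
  have hub : dist (γ.symm p) (δ p) ≤ transLen γ + transLen δ := by
    have h := dist_triangle (γ.symm p) p (δ p)
    have h2 : dist (γ.symm p) p = dist p (γ.symm p) := dist_comm _ _
    linarith
  have he : 0 < dist p (γ.symm p) + dist p (δ p) - dist (γ.symm p) (δ p) := by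
    have := lt_of_le_of_ne hub hne
    linarith
  exact exists_mid hT γ δ p (γ.symm p) (δ p) hq hr hlγ hγb hδb he

/-- Orientation (ii): if `d(δ⁻¹p, γp) < l(γ)+l(δ)`, produce another common axis point. -/
lemma keyB (hT : IsRTree T) (γ δ : T ≃ᵢ T) (p : T)
    (hpγ : p ∈ axisSet γ) (hpδ : p ∈ axisSet δ) (hlγ : 0 < transLen γ)
    (hne : dist (δ.symm p) (γ p) ≠ transLen γ + transLen δ) :
    ∃ x, x ∈ axisSet γ ∩ axisSet δ ∧ 0 < dist p x ∧
      dist (γ p) x = transLen γ - dist p x ∧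
      dist (δ.symm p) x = transLen δ - dist p x := by
  have hq : dist p (γ p) = transLen γ := hpγ
  have hr : dist p (δ.symm p) = transLen δ := dist_symm_self δ hpδ
  have hγb : ∀ x : T, dist x (γ x) ≤ dist p x + dist (γ p) x := by
    intro x
    have h := dist_triangle x (γ p) (γ x)
    have h2 : dist (γ p) (γ x) = dist p x := γ.dist_eq p x
    have h3 : dist x (γ p) = dist (γ p) x := dist_comm _ _
    linarith
  have hδb : ∀ x : T, dist x (δ x) ≤ dist p x + dist (δ.symm p) x := by
    intro x
    have h := dist_triangle x p (δ x)
    have h2 : dist p (δ x) = dist (δ.symm p) x := dist_symm_left δ p x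
    have h3 : dist x p = dist p x := dist_comm _ _
    linarith
  have hub : dist (δ.symm p) (γ p) ≤ transLen γ + transLen δ := by
    have h := dist_triangle (δ.symm p) p (γ p)
    have h2 : dist (δ.symm p) p = dist p (δ.symm p) := dist_comm _ _
    linarith
  have he : 0 < dist p (γ p) + dist p (δ.symm p) - dist (γ p) (δ.symm p) := by
    have := lt_of_le_of_ne hub hne
    have hc : dist (γ p) (δ.symm p) = dist (δ.symm p) (γ p) := dist_comm _ _
    linarith
  exact exists_mid hT γ δ p (γ p) (δ.symm p) hq hr hlγ hγb hδb he

end Key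

/-- If the axes of hyperbolic isometries `γ, δ` of a real tree meet in exactly one
point, or meet in a (nonempty) set on which the translation directions of `γ` and
`δ` agree (encoded by `d(γ⁻¹x, δx) = l(γ) + l(δ)` for all common axis points `x`),
then `l(γδ) = l(γ) + l(δ)`. -/
theorem rtree_transLen_comp_eq_add {T : Type*} [MetricSpace T] [Nonempty T]
    (hT : IsRTree T) (γ δ : T ≃ᵢ T)
    (hγ : IsHyperbolicIso γ) (hδ : IsHyperbolicIso δ)
    (hcase : (∃! p : T, p ∈ axisSet γ ∩ axisSet δ) ∨
      ((axisSet γ ∩ axisSet δ).Nonempty ∧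
        ∀ x ∈ axisSet γ ∩ axisSet δ, dist (γ.symm x) (δ x) = transLen γ + transLen δ)) :
    transLen (δ.trans γ) = transLen γ + transLen δ := by
  obtain ⟨hlγ, -⟩ := hγ
  obtain ⟨hlδ, -⟩ := hδ
  -- Step 1: obtain a common axis point with both "direction" equalities.
  obtain ⟨p, hpγ, hpδ, key1, key2⟩ :
      ∃ p : T, p ∈ axisSet γ ∧ p ∈ axisSet δ ∧
        dist (γ.symm p) (δ p) = transLen γ + transLen δ ∧
        dist (δ.symm p) (γ p) = transLen γ + transLen δ := by
    rcases hcase with ⟨p, ⟨hpγ, hpδ⟩, huniq⟩ | ⟨⟨p, hpγ, hpδ⟩, hall⟩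
    · refine ⟨p, hpγ, hpδ, ?_, ?_⟩
      · by_contra hne
        obtain ⟨x, hx, hpx, -, -⟩ := keyA hT γ δ p hpγ hpδ hlγ hne
        have hxp := huniq x hx
        rw [hxp] at hpx
        simp at hpx
      · by_contra hne
        obtain ⟨x, hx, hpx, -, -⟩ := keyB hT γ δ p hpγ hpδ hlγ hne
        have hxp := huniq x hx
        rw [hxp] at hpx
        simp at hpx
    · refine ⟨p, hpγ, hpδ, hall p ⟨hpγ, hpδ⟩, ?_⟩
      by_contra hne
      obtain ⟨x, hx, hpx, hqx, hrx⟩ := keyB hT γ δ p hpγ hpδ hlγ hne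
      have hxval := hall x hx
      have e1 : dist x (γ p) = dist (γ.symm x) p := dist_symm_left γ x p
      have e2 : dist p (δ x) = dist (δ.symm p) x := dist_symm_left δ p x
      have htr := dist_triangle (γ.symm x) p (δ x)
      have c1 : dist (γ p) x = dist x (γ p) := dist_comm _ _
      rw [c1, e1] at hqx
      rw [← e2] at hrx
      linarith
  set L : ℝ := transLen γ + transLen δ with hLdef
  have hLpos : 0 < L := by positivity
  -- Step 2: the composition and its first two powers at p.
  have hiso : ∀ a b : T, dist (γ (δ a)) (γ (δ b)) = dist a b := by
    intro a b
    rw [γ.dist_eq, δ.dist_eq]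
  have h1 : dist p (γ (δ p)) = L := by
    rw [dist_symm_left γ p (δ p)]
    exact key1
  -- chain computations for the square
  have hu : dist p (δ.symm (γ.symm p)) = L := by
    rw [dist_symm_right δ p (γ.symm p), dist_comm]
    exact key1
  have d1 : dist (δ.symm p) (δ.symm (γ.symm p)) = transLen γ := by
    rw [δ.symm.dist_eq p (γ.symm p)]
    exact dist_symm_self γ hpγ
  have d2 : dist (γ p) (γ (δ p)) = transLen δ := by
    rw [γ.dist_eq p (δ p)]
    exact hpδ
  have hstep1 : transLen γ + L ≤ dist (δ.symm (γ.symm p)) (γ p) := by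
    have hmin := gromov_min hT.2 (δ.symm p) (γ p) (δ.symm (γ.symm p)) p
    have c1 : dist (δ.symm p) p = transLen δ := by
      rw [dist_comm]; exact dist_symm_self δ hpδ
    have c2 : dist (δ.symm (γ.symm p)) p = L := by rw [dist_comm]; exact hu
    have c3 : dist (γ p) p = transLen γ := by rw [dist_comm]; exact hpγ
    have h0 : dist (δ.symm p) p + dist (γ p) p - dist (δ.symm p) (γ p) ≤ 0 := by
      rw [c1, c3, key2]; linarith
    rcases min_le_iff.mp (hmin.trans h0) with h | h
    · rw [c1, c2, d1] at h
      linarith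
    · rw [c3, c2] at h
      have c4 : dist (γ p) (δ.symm (γ.symm p)) = dist (δ.symm (γ.symm p)) (γ p) :=
        dist_comm _ _
      rw [c4] at h
      linarith
  have hstep2 : dist p (γ (δ (γ (δ p)))) = 2 * L := by
    have hmin := gromov_min hT.2 (δ.symm (γ.symm p)) (γ p) (γ (δ p)) p
    have c2 : dist (δ.symm (γ.symm p)) p = L := by rw [dist_comm]; exact hu
    have c3 : dist (γ p) p = transLen γ := by rw [dist_comm]; exact hpγ
    have c5 : dist (γ (δ p)) p = L := by rw [dist_comm]; exact h1
    have c6 : dist (γ p) (γ (δ p)) = transLen δ := d2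
    have hR : dist (δ.symm (γ.symm p)) p + dist (γ p) p
        - dist (δ.symm (γ.symm p)) (γ p) ≤ 0 := by
      rw [c2, c3]; linarith
    have h0 : dist (δ.symm (γ.symm p)) p + dist (γ (δ p)) p
        - dist (δ.symm (γ.symm p)) (γ (δ p)) ≤ 0 := by
      rcases min_le_iff.mp (hmin.trans hR) with h | h
      · exact h
      · rw [c3, c5, c6] at h
        linarith
    have htri : dist (δ.symm (γ.symm p)) (γ (δ p)) ≤
        dist (δ.symm (γ.symm p)) p + dist p (γ (δ p)) := dist_triangle _ _ _
    have hdu : dist (δ.symm (γ.symm p)) (γ (δ p)) = 2 * L := by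
      rw [c2, c5] at h0
      rw [c2, h1] at htri
      linarith
    rw [dist_symm_left γ p (δ (γ (δ p))), dist_symm_left δ (γ.symm p) (γ (δ p))]
    exact hdu
  -- Step 3: powers of the composition move p by exactly n*L.
  have hchain := chain_dist hT.2 (fun x => γ (δ x)) hiso p L hLpos h1 hstep2
  have hisoN := iter_iso (fun x : T => γ (δ x)) hiso
  -- Step 4: lower bound for every point.
  have hlow : ∀ x : T, L ≤ dist x (γ (δ x)) := by
    intro x
    by_contra hlt
    push_neg at hlt
    have hsub : ∀ n : ℕ, dist x ((fun y => γ (δ y))^[n] x) ≤ n * dist x (γ (δ x)) := by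
      intro n
      induction n with
      | zero => simp
      | succ k ih =>
        have step : dist x ((fun y => γ (δ y))^[k + 1] x) ≤
            dist x ((fun y => γ (δ y))^[k] x) +
            dist ((fun y => γ (δ y))^[k] x) ((fun y => γ (δ y))^[k] (γ (δ x))) := by
          rw [Function.iterate_succ_apply]
          exact dist_triangle _ _ _
        rw [hisoN k x (γ (δ x))] at step
        push_cast
        push_cast at ih
        linarith
    have hup : ∀ n : ℕ, (n : ℝ) * L ≤ (n : ℝ) * dist x (γ (δ x)) + 2 * dist x p := by
      intro n
      have hc := hchain n
      have htri : dist p ((fun y => γ (δ y))^[n] p) ≤ dist p x +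
          dist x ((fun y => γ (δ y))^[n] x) +
          dist ((fun y => γ (δ y))^[n] x) ((fun y => γ (δ y))^[n] p) :=
        dist_triangle4 _ _ _ _
      rw [hisoN n x p, hc] at htri
      have h5 := hsub n
      have hcomm : dist p x = dist x p := dist_comm _ _
      push_cast at h5 ⊢
      linarith
    have hpos : 0 < L - dist x (γ (δ x)) := by linarith
    obtain ⟨n, hn⟩ := exists_nat_gt (2 * dist x p / (L - dist x (γ (δ x))))
    have h2n : 2 * dist x p < (n : ℝ) * (L - dist x (γ (δ x))) := by
      rwa [div_lt_iff₀ hpos] at hn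
    have := hup n
    nlinarith
  -- Step 5: conclude.
  have happ : ∀ x : T, (δ.trans γ) x = γ (δ x) := fun x => rfl
  have hub : transLen (δ.trans γ) ≤ L := by
    have h := transLen_le (δ.trans γ) p
    rw [happ p, h1] at h
    exact h
  have hlb : L ≤ transLen (δ.trans γ) := by
    refine le_ciInf fun x => ?_
    rw [happ x]
    exact hlow x
  linarith
end

section
/- Let A be a commutative ℂ-algebra equipped with a Poisson bracket {·,·} (a biderivation satisfying antisymmetry and Jacobi), let v be a valuation on A with v(fg) = v(f) + v(g), and suppose v({f,g}) ≤ v(f) + v(g) for all f, g. Extend v to the fraction field K of A (assumed a domain) with valuation ring O_v, maximal ideal M_v, and residue field k_v = ℂ. Then the map {f,g}_v := ({f,g}/(fg) mod M_v) satisfies the Leibniz identity in the second variable: {f, g₁g₂}_v = {f, g₁}_v + {f, g₂}_v for all nonzero f, g₁, g₂ ∈ A. -/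
/-- Let `A` be a commutative Poisson ℂ-algebra and integral domain with fraction
field `K`, `v` a real valuation on `K` (values in `{-∞} ∪ ℝ`) with
`v({f,g}) ≤ v(f) + v(g)`, and residue field `ℂ` (encoded by a residue map
`res : K → ℂ` which is additive and multiplicative on `O_v = {v ≤ 0}`, kills
`M_v = {v < 0}` and sends `1` to `1`).  Then the residual bracket
`{f,g}_v := res({f,g}/(fg))` satisfies the Leibniz identity in the second
variable: `{f, g₁g₂}_v = {f, g₁}_v + {f, g₂}_v`. -/
theorem residual_bracket_leibniz {A K : Type*} [CommRing A] [Algebra ℂ A] [IsDomain A]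
    [Field K] [Algebra A K] [IsFractionRing A K]
    (P : A →ₗ[ℂ] A →ₗ[ℂ] A)
    (hanti : ∀ f g : A, P f g = - P g f)
    (hjacobi : ∀ f g h : A, P f (P g h) + P g (P h f) + P h (P f g) = 0)
    (hleib : ∀ f g h : A, P f (g * h) = g * P f h + h * P f g)
    (v : K → WithBot ℝ)
    (hv0 : ∀ x : K, v x = ⊥ ↔ x = 0)
    (hvmul : ∀ x y : K, v (x * y) = v x + v y)
    (hvadd : ∀ x y : K, v (x + y) ≤ max (v x) (v y))
    (hPv : ∀ f g : A, v (algebraMap A K (P f g)) ≤ v (algebraMap A K f) + v (algebraMap A K g))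
    (res : K → ℂ)
    (hres_add : ∀ x y : K, v x ≤ 0 → v y ≤ 0 → res (x + y) = res x + res y)
    (hres_mul : ∀ x y : K, v x ≤ 0 → v y ≤ 0 → res (x * y) = res x * res y)
    (hres_zero : ∀ x : K, v x < 0 → res x = 0)
    (hres_one : res 1 = 1) :
    ∀ f g₁ g₂ : A, f ≠ 0 → g₁ ≠ 0 → g₂ ≠ 0 →
      res (algebraMap A K (P f (g₁ * g₂)) / (algebraMap A K f * algebraMap A K (g₁ * g₂))) =
        res (algebraMap A K (P f g₁) / (algebraMap A K f * algebraMap A K g₁)) +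
          res (algebraMap A K (P f g₂) / (algebraMap A K f * algebraMap A K g₂)) := by
  intro f g₁ g₂ hf hg₁ hg₂
  set F := algebraMap A K with hF
  have hinj : Function.Injective F := IsFractionRing.injective A K
  have hFne : ∀ a : A, a ≠ 0 → F a ≠ 0 := fun a ha => by
    simpa [map_zero] using fun h => ha (hinj (by simpa [map_zero] using h))
  have hFf := hFne f hf
  have hFg₁ := hFne g₁ hg₁
  have hFg₂ := hFne g₂ hg₂
  -- key: v (a / b) ≤ 0 when b ≠ 0 and v a ≤ v b
  have hdiv : ∀ a b : K, b ≠ 0 → v a ≤ v b → v (a / b) ≤ 0 := by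
    intro a b hb hab
    have heq : v (a / b) + v b = v a := by
      rw [← hvmul]; congr 1; field_simp
    have hbne : v b ≠ ⊥ := fun h => hb ((hv0 b).mp h)
    rcases h : v (a / b) with _ | r
    · exact bot_le
    · rcases hb' : v b with _ | s
      · exact absurd hb' hbne
      · rw [h, hb'] at heq
        have heq' : ((r : ℝ) : WithBot ℝ) + ((s : ℝ) : WithBot ℝ) = v a := heq
        have hva : ((r + s : ℝ) : WithBot ℝ) ≤ ((s : ℝ) : WithBot ℝ) := by
          rw [WithBot.coe_add, heq']
          exact le_of_le_of_eq hab hb'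
        have hrs : r + s ≤ s := WithBot.coe_le_coe.mp hva
        have hr : r ≤ 0 := by linarith
        show ((r : ℝ) : WithBot ℝ) ≤ ((0 : ℝ) : WithBot ℝ)
        exact_mod_cast hr
  have hO : ∀ a b : A, b ≠ 0 → v (F (P a b) / (F a * F b)) ≤ 0 := by
    intro a b hb
    by_cases ha : a = 0
    · subst ha
      simp only [map_zero, LinearMap.zero_apply, map_zero, zero_mul, zero_div]
      exact le_of_lt (by rw [(hv0 0).mpr rfl]; exact bot_lt_iff_ne_bot.mpr (by simp))
    · refine hdiv _ _ (mul_ne_zero (hFne a ha) (hFne b hb)) ?_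
      rw [hvmul]; exact hPv a b
  have hx := hO f g₁ hg₁
  have hy := hO f g₂ hg₂
  have hsplit : F (P f (g₁ * g₂)) / (F f * F (g₁ * g₂)) =
      F (P f g₁) / (F f * F g₁) + F (P f g₂) / (F f * F g₂) := by
    rw [hleib f g₁ g₂, map_add, map_mul, map_mul, map_mul]
    field_simp
    ring
  rw [hsplit, hres_add _ _ hx hy]
end
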